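/- arXiv:1504.02214 — 2 statements merged into one kernel-verified Lean document; each statement's English description precedes it below -/
import Mathlib

section
/- Let x ∈ ℂ^N, N = 2^J, have support contained in a cyclic interval of length m < 2^{L+1}. For κ ∈ {0,...,2^{J-L-1}-1}, let z^(κ) = F_{2^{L+1}}^{-1} (x̂_{2^{J-L-1}k+κ})_{k=0}^{2^{L+1}-1}. Then for each ℓ ∈ {0,...,2^{L+1}-1}, z^(κ)_ℓ = Σ_{j=0}^{2^{J-L-1}-1} x_{ℓ+2^{L+1}j} ω_N^{(ℓ+2^{L+1}j)κ}, where ω_N = e^{-2πi/N}. -/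
/-!
Sampling `x̂` along the coset `P k + κ` (with `N = M P`) aliases: the exponent of
`ω_N^{(r + M t)(P k + κ)}` differs from that of `ω_M^{r k} ω_N^{(r + M t) κ}` by the
integer `t k`, so the subsampled spectrum is the length-`M` DFT of the `M`-periodization
of `x_j ω_N^{j κ}`. Inverting that DFT, by orthogonality of the `M`-th roots of unity,
returns the periodization itself.
-/

/-- Discrete Fourier transform of length `N`, `(dft N x) k = ∑_{j<N} x j ω_N^{jk}`
with `ω_N = e^{-2πi/N}`. -/
noncomputable def dft (N : ℕ) (x : ℕ → ℂ) (k : ℕ) : ℂ :=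
  ∑ j ∈ Finset.range N, x j * Complex.exp (-2 * Real.pi * Complex.I * ((j : ℂ) * k) / N)

/-- `2^j`-periodization of a vector of length `2^J`. -/
noncomputable def perio (x : ℕ → ℂ) (J j k : ℕ) : ℂ :=
  ∑ ℓ ∈ Finset.range (2 ^ (J - j)), x (k + 2 ^ j * ℓ)

/-- Inverse DFT of length `2^{L+1}` applied to the `κ`-shifted subsampling
`(x̂_{2^{J-L-1}k+κ})_{k<2^{L+1}}` of the DFT of `x ∈ ℂ^{2^J}`. -/
noncomputable def zvec (J L : ℕ) (x : ℕ → ℂ) (κ ℓ : ℕ) : ℂ :=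
  (2 ^ (L + 1) : ℂ)⁻¹ * ∑ k ∈ Finset.range (2 ^ (L + 1)),
    dft (2 ^ J) x (2 ^ (J - L - 1) * k + κ) *
      Complex.exp (2 * Real.pi * Complex.I * ((k : ℂ) * ℓ) / 2 ^ (L + 1))

open Complex Finset
open scoped Real

theorem sum_range_mul_eq_sum_sum {M : Type*} [AddCommMonoid M] (f : ℕ → M) (m p : ℕ) :
    ∑ j ∈ range (m * p), f j = ∑ r ∈ range m, ∑ t ∈ range p, f (r + m * t) := by
  induction p with
  | zero => simp
  | succ p ih =>
    rw [Nat.mul_succ, sum_range_add, ih, ← sum_add_distrib]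
    simp only [sum_range_succ, add_comm (m * p)]

theorem sum_range_exp_eq_ite {M : ℕ} (hM : M ≠ 0) (d : ℤ) :
    ∑ k ∈ range M, exp (2 * π * I * (k * d) / M) =
      if (M : ℤ) ∣ d then (M : ℂ) else 0 := by
  have hζ := isPrimitiveRoot_exp M hM
  set ζ := exp (2 * π * I / M)
  have hterm (k : ℕ) : exp (2 * π * I * (k * d) / M) = (ζ ^ d) ^ k := by
    rw [← zpow_natCast, ← zpow_mul, ← exp_int_mul]
    push_cast
    ring_nf
  simp_rw [hterm]
  split_ifs with hd
  · simp [(hζ.zpow_eq_one_iff_dvd d).2 hd]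
  · have hpow : (ζ ^ d) ^ M = 1 := by
      rw [← zpow_natCast, ← zpow_mul, mul_comm, zpow_mul, zpow_natCast, hζ.pow_eq_one,
        one_zpow]
    rw [geom_sum_eq (mt (hζ.zpow_eq_one_iff_dvd d).1 hd), hpow, sub_self, zero_div]

noncomputable def idft (M : ℕ) (v : ℕ → ℂ) (ℓ : ℕ) : ℂ :=
  (M : ℂ)⁻¹ * ∑ k ∈ range M, v k * exp (2 * π * I * ((k : ℂ) * ℓ) / M)

theorem natCast_dvd_sub_iff_eq {M r ℓ : ℕ} (hr : r < M) (hℓ : ℓ < M) :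
    (M : ℤ) ∣ (ℓ : ℤ) - r ↔ r = ℓ := by
  rw [← Int.modEq_iff_dvd, Int.natCast_modEq_iff]
  exact ⟨fun h => h.eq_of_lt_of_lt hr hℓ, fun h => h ▸ rfl⟩

theorem idft_dft {M ℓ : ℕ} (y : ℕ → ℂ) (hℓ : ℓ < M) :
    idft M (dft M y) ℓ = y ℓ := by
  have hM : M ≠ 0 := by omega
  have horth : ∀ r ∈ range M,
      ∑ k ∈ range M, y r * exp (-2 * π * I * ((r : ℂ) * k) / M) *
        exp (2 * π * I * ((k : ℂ) * ℓ) / M) = if r = ℓ then M * y ℓ else 0 := by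
    intro r hr
    have hexp (k : ℕ) :
        exp (-2 * π * I * ((r : ℂ) * k) / M) * exp (2 * π * I * ((k : ℂ) * ℓ) / M) =
          exp (2 * π * I * (k * (((ℓ : ℤ) - r : ℤ) : ℂ)) / M) := by
      rw [← exp_add]
      push_cast
      ring_nf
    simp_rw [mul_assoc (y r), hexp, ← mul_sum, sum_range_exp_eq_ite hM,
      natCast_dvd_sub_iff_eq (mem_range.1 hr) hℓ]
    split_ifs with hrℓ
    · rw [hrℓ, mul_comm]
    · rw [mul_zero]
  simp only [idft, dft, sum_mul]
  rw [sum_comm, sum_congr rfl horth, sum_ite_eq' _ _ (fun _ => _), if_pos (mem_range.2 hℓ)]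
  field_simp

theorem dft_kernel_subsample_eq {M P : ℕ} (hM : M ≠ 0) (hP : P ≠ 0) (r t k κ : ℕ) :
    exp (-2 * π * I * (((r + M * t : ℕ) : ℂ) * ((P * k + κ : ℕ) : ℂ)) /
        ((M * P : ℕ) : ℂ)) =
      exp (-2 * π * I * ((r : ℂ) * k) / M) *
        exp (-2 * π * I * (((r + M * t : ℕ) : ℂ) * κ) / ((M * P : ℕ) : ℂ)) := by
  rw [← Complex.exp_add, exp_eq_exp_iff_exists_int]
  refine ⟨-(t * k : ℕ), ?_⟩
  push_cast
  field_simp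
  ring

theorem dft_mul_add_eq_dft {M P N : ℕ} (hN : M * P = N) (x : ℕ → ℂ) (κ k : ℕ) :
    dft N x (P * k + κ) = dft M (fun r => ∑ t ∈ range P,
      x (r + M * t) * exp (-2 * π * I * (((r + M * t : ℕ) : ℂ) * κ) / N)) k := by
  subst hN
  simp only [dft, sum_mul]
  rw [sum_range_mul_eq_sum_sum]
  refine sum_congr rfl fun r hr => sum_congr rfl fun t ht => ?_
  rw [dft_kernel_subsample_eq (Nat.ne_zero_of_lt (mem_range.1 hr))
    (Nat.ne_zero_of_lt (mem_range.1 ht))]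
  ring

theorem zvec_formula_general (J L κ : ℕ) (hL : L + 1 ≤ J) (x : ℕ → ℂ) :
    ∀ ℓ < 2 ^ (L + 1),
      zvec J L x κ ℓ = ∑ j ∈ Finset.range (2 ^ (J - L - 1)),
        x (ℓ + 2 ^ (L + 1) * j) *
          Complex.exp (-2 * Real.pi * Complex.I *
            (((ℓ + 2 ^ (L + 1) * j : ℕ) : ℂ) * κ) / 2 ^ J) := by
  intro ℓ hℓ
  have hN : 2 ^ (L + 1) * 2 ^ (J - L - 1) = 2 ^ J := by
    rw [← pow_add]
    congr 1
    omega
  have hz : zvec J L x κ ℓ =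
      idft (2 ^ (L + 1)) (fun k => dft (2 ^ J) x (2 ^ (J - L - 1) * k + κ)) ℓ := by
    simp only [zvec, idft, Nat.cast_pow, Nat.cast_ofNat]
  simp_rw [hz, dft_mul_add_eq_dft hN]
  rw [idft_dft _ hℓ]
  simp only [Nat.cast_pow, Nat.cast_ofNat]

/-- Explicit formula for the shifted subsampled inverse DFT:
`z^{(κ)}_ℓ = ∑_j x_{ℓ+2^{L+1}j} ω_N^{(ℓ+2^{L+1}j)κ}`. -/
theorem zvec_formula (J L m μ κ : ℕ) (hL : L + 1 ≤ J) (hm : m < 2 ^ (L + 1))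
    (hκ : κ < 2 ^ (J - L - 1)) (x : ℕ → ℂ)
    (hsupp : ∀ k < 2 ^ J, (∀ r < m, k ≠ (μ + r) % 2 ^ J) → x k = 0) :
    ∀ ℓ < 2 ^ (L + 1),
      zvec J L x κ ℓ = ∑ j ∈ Finset.range (2 ^ (J - L - 1)),
        x (ℓ + 2 ^ (L + 1) * j) *
          Complex.exp (-2 * Real.pi * Complex.I *
            (((ℓ + 2 ^ (L + 1) * j : ℕ) : ℂ) * κ) / 2 ^ J) :=
  zvec_formula_general J L κ hL x
end

section
/- Let x ∈ ℂ^N, N = 2^J, have support {(μ+r) mod N : r = 0,...,m-1} with m < 2^{L+1} and first support index μ = μ^(L+1) + 2^{L+1}ν where μ^(L+1) ∈ {0,...,2^{L+1}-1}. For κ ∈ {0,...,2^{J-L-1}-1}, let z^(κ) = F_{2^{L+1}}^{-1}(x̂_{2^{J-L-1}k+κ})_{k=0}^{2^{L+1}-1}. Then z^(κ)_{(μ^(L+1)+k) mod 2^{L+1}} = x_{(μ+k) mod N} · ω_N^{κ(μ+k)} for all k = 0,...,m-1, where ω_N = e^{-2πi/N}. -/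
open Finset Complex Real

theorem sum_range_exp_two_pi_I_mul_div_eq_ite (M : ℕ) (hM : M ≠ 0) (a : ℤ) :
    ∑ t ∈ range M, exp (2 * π * I * (t * a) / M) = if (M : ℤ) ∣ a then (M : ℂ) else 0 := by
  have hω := Complex.isPrimitiveRoot_exp M hM
  set ζ := exp (2 * π * I / M) ^ a
  have hpow (t : ℕ) : exp (2 * π * I * (t * a) / M) = ζ ^ t := by
    rw [← zpow_natCast, ← zpow_mul, ← exp_int_mul]
    congr 1
    push_cast
    ring
  simp_rw [hpow]
  split_ifs with hdvd
  · simp [ζ, (hω.zpow_eq_one_iff_dvd a).2 hdvd]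
  · have hζ : ζ ≠ 1 := mt (hω.zpow_eq_one_iff_dvd a).1 hdvd
    have hζM : ζ ^ M = 1 := by
      rw [← zpow_natCast, ← zpow_mul, mul_comm a, zpow_mul, zpow_natCast, hω.pow_eq_one, one_zpow]
    rw [geom_sum_eq hζ, hζM, sub_self, zero_div]

theorem exp_neg_two_pi_I_mul_div_congr {N a b : ℕ} (κ : ℕ) (hab : a ≡ b [MOD N]) :
    exp (-2 * π * I * (κ * a) / N) = exp (-2 * π * I * (κ * b) / N) := by
  rcases eq_or_ne N 0 with rfl | hN
  · rw [Nat.modEq_zero_iff.1 hab]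
  obtain ⟨c, hc⟩ := Nat.modEq_iff_dvd.1 hab
  refine exp_eq_exp_iff_exists_int.2 ⟨κ * c, ?_⟩
  have hcC : (b : ℂ) = a + N * c := by
    rw [← sub_eq_iff_eq_add']; exact_mod_cast hc
  rw [hcC]
  push_cast
  field_simp
  ring

theorem inv_mul_sum_dft_mul_exp (T M : ℕ) (hM : M ≠ 0) (x : ℕ → ℂ) (κ ℓ : ℕ) :
    (M : ℂ)⁻¹ * ∑ k ∈ range M, dft (T * M) x (T * k + κ) * exp (2 * π * I * (k * ℓ) / M) =
      ∑ j ∈ range (T * M),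
        if j ≡ ℓ [MOD M] then x j * exp (-2 * π * I * (κ * j) / (T * M : ℕ)) else 0 := by
  rcases eq_or_ne T 0 with rfl | hT
  · simp [dft]
  have hterm (j k : ℕ) :
      (M : ℂ)⁻¹ * (x j * exp (-2 * π * I * (j * (T * k + κ : ℕ)) / (T * M : ℕ)) *
          exp (2 * π * I * (k * ℓ) / M)) =
        x j * exp (-2 * π * I * (κ * j) / (T * M : ℕ)) *
          ((M : ℂ)⁻¹ * exp (2 * π * I * (k * ((ℓ : ℤ) - j : ℤ)) / M)) := by
    have hphase : exp (-2 * π * I * (j * (T * k + κ : ℕ)) / (T * M : ℕ)) *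
        exp (2 * π * I * (k * ℓ) / M) = exp (-2 * π * I * (κ * j) / (T * M : ℕ)) *
          exp (2 * π * I * (k * ((ℓ : ℤ) - j : ℤ)) / M) := by
      rw [← Complex.exp_add, ← Complex.exp_add]
      congr 1
      push_cast
      field_simp
      ring
    rw [mul_assoc (x j), hphase]
    ring
  unfold dft
  simp_rw [Finset.sum_mul]
  rw [Finset.sum_comm, Finset.mul_sum]
  refine Finset.sum_congr rfl fun j _ => ?_
  simp_rw [Finset.mul_sum, hterm, ← Finset.mul_sum, sum_range_exp_two_pi_I_mul_div_eq_ite M hM,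
    ← Nat.modEq_iff_dvd]
  split_ifs
  · field_simp
  · simp

theorem zvec_eq_sum_modEq {J L : ℕ} (hLJ : L + 1 ≤ J) (x : ℕ → ℂ) (κ ℓ : ℕ) :
    zvec J L x κ ℓ = ∑ j ∈ range (2 ^ J),
      if j ≡ ℓ [MOD 2 ^ (L + 1)] then x j * exp (-2 * π * I * (κ * j) / 2 ^ J) else 0 := by
  have hJ : 2 ^ J = 2 ^ (J - L - 1) * 2 ^ (L + 1) := by
    rw [← pow_add]
    congr 1
    omega
  have h := inv_mul_sum_dft_mul_exp (2 ^ (J - L - 1)) (2 ^ (L + 1)) (by positivity) x κ ℓ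
  rw [← hJ] at h
  push_cast at h
  exact h

theorem eq_zero_of_modEq_of_ne {α : Type*} [Zero α] {x : ℕ → α} {N M m μ k j : ℕ}
    (hMN : M ∣ N) (hm : m ≤ M)
    (hsupp : ∀ j < N, (∀ r < m, j ≠ (μ + r) % N) → x j = 0)
    (hk : k < m) (hj : j < N) (hjk : j ≡ μ + k [MOD M]) (hne : j ≠ (μ + k) % N) : x j = 0 := by
  refine hsupp j hj fun r hr hjr => hne ?_
  have hrk : μ + r ≡ μ + k [MOD M] :=
    ((Nat.mod_modEq _ _).of_dvd hMN).symm.trans (hjr ▸ hjk)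
  rw [hjr, Nat.ModEq.eq_of_lt_of_lt (Nat.ModEq.add_left_cancel' μ hrk) (by omega) (by omega)]

theorem zvec_on_support_general (J L m μL ν κ : ℕ) (hL : L + 1 < J) (hm : m < 2 ^ (L + 1))
    (x : ℕ → ℂ)
    (hsupp : ∀ k < 2 ^ J,
      (∀ r < m, k ≠ (μL + 2 ^ (L + 1) * ν + r) % 2 ^ J) → x k = 0) :
    ∀ k < m,
      zvec J L x κ ((μL + k) % 2 ^ (L + 1)) =
        x ((μL + 2 ^ (L + 1) * ν + k) % 2 ^ J) *
          Complex.exp (-2 * Real.pi * Complex.I *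
            ((κ : ℂ) * (μL + 2 ^ (L + 1) * ν + k : ℕ)) / 2 ^ J) := by
  intro k hk
  set μ := μL + 2 ^ (L + 1) * ν
  have hMN : 2 ^ (L + 1) ∣ 2 ^ J := pow_dvd_pow 2 hL.le
  have hℓ : μ + k ≡ (μL + k) % 2 ^ (L + 1) [MOD 2 ^ (L + 1)] := by
    rw [Nat.ModEq, Nat.mod_mod, add_right_comm, Nat.add_mul_mod_self_left]
  have hj₀ : (μ + k) % 2 ^ J ≡ μ + k [MOD 2 ^ (L + 1)] :=
    (Nat.mod_modEq _ _).of_dvd hMN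
  rw [zvec_eq_sum_modEq hL.le,
    Finset.sum_eq_single_of_mem _ (mem_range.2 (Nat.mod_lt _ (by positivity)))]
  · rw [if_pos (hj₀.trans hℓ)]
    congr 1
    exact_mod_cast exp_neg_two_pi_I_mul_div_congr κ (Nat.mod_modEq (μ + k) (2 ^ J))
  · intro j hj hne
    split_ifs with hjℓ
    · rw [eq_zero_of_modEq_of_ne hMN hm.le hsupp hk (mem_range.1 hj) (hjℓ.trans hℓ.symm) hne,
        zero_mul]
    · rfl

/-- On the support, `z^{(κ)}_{(μ^{(L+1)}+k) mod 2^{L+1}} = x_{(μ+k) mod N} ω_N^{κ(μ+k)}`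
where `μ = μ^{(L+1)} + 2^{L+1}ν`. -/
theorem zvec_on_support (J L m μL ν κ : ℕ) (hL : L + 1 < J) (hm : m < 2 ^ (L + 1))
    (hμL : μL < 2 ^ (L + 1)) (hν : ν < 2 ^ (J - L - 1)) (hκ : κ < 2 ^ (J - L - 1))
    (x : ℕ → ℂ)
    (hsupp : ∀ k < 2 ^ J,
      (∀ r < m, k ≠ (μL + 2 ^ (L + 1) * ν + r) % 2 ^ J) → x k = 0) :
    ∀ k < m,
      zvec J L x κ ((μL + k) % 2 ^ (L + 1)) =
        x ((μL + 2 ^ (L + 1) * ν + k) % 2 ^ J) *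
          Complex.exp (-2 * Real.pi * Complex.I *
            ((κ : ℂ) * (μL + 2 ^ (L + 1) * ν + k : ℕ)) / 2 ^ J) :=
  zvec_on_support_general J L m μL ν κ hL hm x hsupp
end
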